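/- arXiv:2006.16141 — 2 statements merged into one kernel-verified Lean document; each statement's English description precedes it below -/
import Mathlib

section
/- Let ρ be a gauge. Define a_{n,ε} := 0 if ε < 1/(n+1) and a_{n,ε} := 1 otherwise. Then for every fixed n ∈ ℕ the net (a_{n,ε})_ε is ρ-negligible (in fact eventually 0 as ε → 0⁺), yet for any net (N_ε) of naturals, Σ_{n=0}^{N_ε} a_{n,ε} = N_ε − ⌈1/ε⌉ + 2 whenever N_ε ≥ ⌈1/ε⌉ − 1; in particular, if N_ε − ⌈1/ε⌉ → +∞, the net of partial sums is not ρ-negligible. Hence equality of terms (as generalized numbers) does not imply equality of hyperfinite sums. -/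
open Filter Finset

def IsGauge (ρ : ℝ → ℝ) : Prop :=
  (∀ ε : ℝ, 0 < ε → ε ≤ 1 → 0 < ρ ε ∧ ρ ε ≤ 1) ∧
    Tendsto ρ (nhdsWithin 0 (Set.Ioi 0)) (nhds 0)

def EvSmall (P : ℝ → Prop) : Prop := ∃ ε₀ : ℝ, 0 < ε₀ ∧ ∀ ε : ℝ, 0 < ε → ε ≤ ε₀ → P ε

/-- The counterexample net: `a n ε = 0` if `ε < 1/(n+1)`, else `1`. -/
noncomputable def counterNet (n : ℕ) (ε : ℝ) : ℝ := if ε < 1 / (n + 1) then 0 else 1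

/-!
The `n`-th term vanishes as soon as `ε < 1/(n+1)`, so each term is eventually zero and hence
negligible. The partial sum up to `N ε`, however, counts the indices `n ≥ ⌈1/ε⌉₊ - 1`, and so
equals `N ε - ⌈1/ε⌉₊ + 2`; when this tends to infinity the sums are not even bounded by
`ρ ε ^ 0 = 1`.
-/

open Topology

theorem evSmall_iff_eventually {P : ℝ → Prop} : EvSmall P ↔ ∀ᶠ ε in 𝓝[>] 0, P ε := by
  simp only [EvSmall, (nhdsGT_basis_Ioc (0 : ℝ)).eventually_iff, Set.mem_Ioc, and_imp]

theorem IsGauge.eventually_pos {ρ : ℝ → ℝ} (hρ : IsGauge ρ) : ∀ᶠ ε in 𝓝[>] 0, 0 < ρ ε :=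
  evSmall_iff_eventually.mp ⟨1, one_pos, fun ε hε hε1 => (hρ.1 ε hε hε1).1⟩

theorem IsGauge.evSmall_abs_le_pow_of_eventually_eq_zero {ρ x : ℝ → ℝ} (hρ : IsGauge ρ)
    (hx : ∀ᶠ ε in 𝓝[>] 0, x ε = 0) (q : ℕ) : EvSmall (fun ε => |x ε| ≤ ρ ε ^ q) := by
  refine evSmall_iff_eventually.mpr ?_
  filter_upwards [hx, hρ.eventually_pos] with ε hxε hρε
  rw [hxε, abs_zero]
  positivity

theorem not_evSmall_abs_le_one_of_tendsto_atTop {x : ℝ → ℝ} (hx : Tendsto x (𝓝[>] 0) atTop) :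
    ¬ EvSmall (fun ε => |x ε| ≤ 1) := by
  rw [evSmall_iff_eventually]
  intro hbounded
  obtain ⟨ε, hle, hgt⟩ := (hbounded.and (hx.eventually_gt_atTop 1)).exists
  exact (le_abs_self (x ε)).not_gt (hle.trans_lt hgt)

theorem eventually_counterNet_eq_zero (n : ℕ) : ∀ᶠ ε in 𝓝[>] 0, counterNet n ε = 0 := by
  filter_upwards [nhdsWithin_le_nhds (gt_mem_nhds (by positivity : (0 : ℝ) < 1 / (n + 1)))]
    with ε hε
  exact if_pos hε

theorem counterNet_eq_ite_ceil_le {ε : ℝ} (hε : 0 < ε) (n : ℕ) :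
    counterNet n ε = if ⌈1 / ε⌉₊ ≤ n + 1 then 1 else 0 := by
  have hlt : ε < 1 / (n + 1) ↔ ¬ ⌈1 / ε⌉₊ ≤ n + 1 := by
    rw [lt_one_div hε (by positivity), Nat.ceil_le, not_le]
    push_cast
    rfl
  by_cases h : ε < 1 / (n + 1)
  · rw [counterNet, if_pos h, if_neg (hlt.mp h)]
  · rw [counterNet, if_neg h, if_pos (not_not.mp (mt hlt.mpr h))]

theorem sum_range_counterNet {ε : ℝ} (hε : 0 < ε) {M : ℕ} (hM : (⌈1 / ε⌉₊ : ℝ) - 1 ≤ M) :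
    ∑ n ∈ range (M + 1), counterNet n ε = (M : ℝ) - ⌈1 / ε⌉₊ + 2 := by
  set c := ⌈1 / ε⌉₊
  have hcM : c ≤ M + 1 := by exact_mod_cast (by linarith : (c : ℝ) ≤ M + 1)
  have hc : 1 ≤ c := Nat.one_le_ceil_iff.mpr (one_div_pos.mpr hε)
  have hfilter : (range (M + 1)).filter (fun n => c ≤ n + 1) = Ico (c - 1) (M + 1) := by
    ext n
    simp only [mem_filter, mem_range, mem_Ico]
    omega
  have hcard : (M + 1 - (c - 1)) + c = M + 2 := by omega
  rw [sum_congr rfl fun n _ => counterNet_eq_ite_ceil_le hε n, sum_boole, hfilter,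
    Nat.card_Ico]
  have hcard' : ((M + 1 - (c - 1) : ℕ) : ℝ) + c = M + 2 := by exact_mod_cast hcard
  linarith

theorem counterNet_terms_negligible_but_sums_not (ρ : ℝ → ℝ) (hρ : IsGauge ρ) :
    (∀ n : ℕ, ∀ q : ℕ, EvSmall (fun ε => |counterNet n ε| ≤ ρ ε ^ q)) ∧
    (∀ N : ℝ → ℕ, ∀ ε : ℝ, 0 < ε → ε ≤ 1 → (⌈1 / ε⌉₊ : ℝ) - 1 ≤ (N ε : ℝ) →
      ∑ n ∈ Finset.range (N ε + 1), counterNet n ε = (N ε : ℝ) - (⌈1 / ε⌉₊ : ℝ) + 2) ∧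
    (∀ N : ℝ → ℕ,
      Tendsto (fun ε => (N ε : ℝ) - (⌈1 / ε⌉₊ : ℝ)) (nhdsWithin 0 (Set.Ioi 0)) atTop →
      ¬ (∀ q : ℕ, EvSmall (fun ε => |∑ n ∈ Finset.range (N ε + 1), counterNet n ε| ≤ ρ ε ^ q))) := by
  refine ⟨fun n => hρ.evSmall_abs_le_pow_of_eventually_eq_zero (eventually_counterNet_eq_zero n),
    fun N ε hε _ hN => sum_range_counterNet hε hN, fun N hN hneg => ?_⟩
  have hsum : ∀ᶠ ε in 𝓝[>] 0, (N ε : ℝ) - ⌈1 / ε⌉₊ + 2 =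
      ∑ n ∈ range (N ε + 1), counterNet n ε := by
    filter_upwards [self_mem_nhdsWithin, hN.eventually_ge_atTop 0] with ε hε hNε
    exact (sum_range_counterNet hε (by linarith)).symm
  refine not_evSmall_abs_le_one_of_tendsto_atTop
    ((tendsto_atTop_add_const_right _ 2 hN).congr' hsum) ?_
  simpa only [pow_zero] using hneg 0
end

section
/- Let ρ be a gauge and let (k_ε) be a net with 0 < k_ε < 1 for all ε, such that both (k_ε) and (1/(1−k_ε)) are ρ-moderate, and 1−k_ε ≥ ρ_ε^m for some m ∈ ℕ and ε small, and k = [k_ε] satisfies k ≤ 1 − ρ_ε^m invertibly (i.e. [k_ε] < 1 in the sharp order). Then the geometric hyperseries converges to 1/(1−k) in the following sense: for every q ∈ ℕ there exists a ρ-moderate net of naturals (M_ε) such that for every net of naturals (N_ε) with N_ε ≥ M_ε for ε small, | Σ_{n=0}^{N_ε} k_ε^n − 1/(1−k_ε) | ≤ ρ_ε^q for ε sufficiently small. -/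
open Filter Finset

def Moderate (ρ : ℝ → ℝ) (x : ℝ → ℝ) : Prop :=
  ∃ N : ℕ, EvSmall (fun ε => |x ε| ≤ ρ ε ^ (-(N : ℤ)))

/-!
Since `∑_{i<n} k^i - 1/(1-k) = -k^n/(1-k)` and `n (1-k) k^n ≤ ∑_{i<n} (1-k) k^i = 1 - k^n ≤ 1`,
the error of the `n`-th partial sum is at most `1 / (n (1-k)^2) ≤ ρ^{-2m} / n`. Hence any
`N ≥ M := ⌊ρ^{-(q+2m)}⌋₊` makes it at most `ρ^q`, and `M` is moderate by construction.
-/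

section GeomSum

variable {K : Type*} [Field K] {k : K}

lemma geom_sum_sub_one_div_one_sub (hk : k ≠ 1) (n : ℕ) :
    ∑ i ∈ range n, k ^ i - 1 / (1 - k) = -(k ^ n / (1 - k)) := by
  have hk' : 1 - k ≠ 0 := sub_ne_zero.2 hk.symm
  rw [geom_sum_eq hk, ← neg_div_neg_eq (k ^ n - 1), neg_sub, neg_sub]
  field_simp
  ring

variable [LinearOrder K] [IsStrictOrderedRing K]

lemma natCast_mul_one_sub_mul_pow_le_one (h0 : 0 ≤ k) (h1 : k ≤ 1) (n : ℕ) :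
    n * (1 - k) * k ^ n ≤ 1 :=
  calc n * (1 - k) * k ^ n = (1 - k) * ∑ _i ∈ range n, k ^ n := by
        rw [sum_const, card_range, nsmul_eq_mul]; ring
    _ ≤ (1 - k) * ∑ i ∈ range n, k ^ i :=
        mul_le_mul_of_nonneg_left
          (sum_le_sum fun i hi => pow_le_pow_of_le_one h0 h1 (mem_range.1 hi).le)
          (sub_nonneg.2 h1)
    _ = 1 - k ^ n := mul_neg_geom_sum k n
    _ ≤ 1 := sub_le_self _ (pow_nonneg h0 n)

lemma abs_geom_sum_sub_one_div_one_sub_mul_le_one (h0 : 0 ≤ k) (h1 : k < 1) (n : ℕ) :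
    |∑ i ∈ range n, k ^ i - 1 / (1 - k)| * (n * (1 - k) ^ 2) ≤ 1 := by
  have hk : 0 < 1 - k := sub_pos.2 h1
  rw [geom_sum_sub_one_div_one_sub h1.ne, abs_neg, abs_of_nonneg (by positivity)]
  calc k ^ n / (1 - k) * (n * (1 - k) ^ 2) = n * (1 - k) * k ^ n := by field_simp
    _ ≤ 1 := natCast_mul_one_sub_mul_pow_le_one h0 h1.le n

lemma abs_geom_sum_sub_one_div_one_sub_le_pow {ρ : K} (hρ : 0 < ρ) (h0 : 0 ≤ k) {m q n : ℕ}
    (hkρ : ρ ^ m ≤ 1 - k) (hn : (ρ ^ (q + 2 * m))⁻¹ ≤ n) :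
    |∑ i ∈ range n, k ^ i - 1 / (1 - k)| ≤ ρ ^ q := by
  have h1 : k < 1 := sub_pos.1 ((pow_pos hρ m).trans_le hkρ)
  have hlower : (ρ ^ q)⁻¹ ≤ n * (1 - k) ^ 2 :=
    calc (ρ ^ q)⁻¹ = (ρ ^ (q + 2 * m))⁻¹ * (ρ ^ m) ^ 2 := by field_simp; ring
      _ ≤ n * (1 - k) ^ 2 := by gcongr
  rw [← one_mul (ρ ^ q), ← mul_inv_le_iff₀ (by positivity)]
  calc |∑ i ∈ range n, k ^ i - 1 / (1 - k)| * (ρ ^ q)⁻¹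
      ≤ |∑ i ∈ range n, k ^ i - 1 / (1 - k)| * (n * (1 - k) ^ 2) := by gcongr
    _ ≤ 1 := abs_geom_sum_sub_one_div_one_sub_mul_le_one h0 h1 n

end GeomSum

section EvSmall

variable {P Q : ℝ → Prop}

lemma EvSmall.mono (h : EvSmall P) (hPQ : ∀ ε, P ε → Q ε) : EvSmall Q :=
  let ⟨ε₀, hε₀, hP⟩ := h
  ⟨ε₀, hε₀, fun ε hε hεε₀ => hPQ ε (hP ε hε hεε₀)⟩

lemma EvSmall.and (hP : EvSmall P) (hQ : EvSmall Q) : EvSmall fun ε => P ε ∧ Q ε := by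
  obtain ⟨ε₁, hε₁, hP⟩ := hP
  obtain ⟨ε₂, hε₂, hQ⟩ := hQ
  exact ⟨min ε₁ ε₂, lt_min hε₁ hε₂, fun ε hε hεmin =>
    ⟨hP ε hε (hεmin.trans (min_le_left _ _)), hQ ε hε (hεmin.trans (min_le_right _ _))⟩⟩

end EvSmall

theorem geometric_hyperseries_general (ρ : ℝ → ℝ) (hρ : IsGauge ρ)
    (k : ℝ → ℝ) (hk : ∀ ε : ℝ, 0 < ε → ε ≤ 1 → 0 < k ε ∧ k ε < 1)
    (m : ℕ) (hminv : EvSmall (fun ε => ρ ε ^ m ≤ 1 - k ε)) :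
    ∀ q : ℕ, ∃ M : ℝ → ℕ, Moderate ρ (fun ε => (M ε : ℝ)) ∧
      ∀ N : ℝ → ℕ, EvSmall (fun ε => M ε ≤ N ε) →
        EvSmall (fun ε =>
          |∑ n ∈ Finset.range (N ε + 1), k ε ^ n - 1 / (1 - k ε)| ≤ ρ ε ^ q) := by
  intro q
  refine ⟨fun ε => ⌊(ρ ε ^ (q + 2 * m))⁻¹⌋₊,
    ⟨q + 2 * m, 1, one_pos, fun ε hε hε1 => ?_⟩, fun N hN => ?_⟩
  · have hρε := (hρ.1 ε hε hε1).1
    simp only [Nat.abs_cast, zpow_neg, zpow_natCast]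
    exact Nat.floor_le (by positivity)
  · have hpos : EvSmall fun ε => 0 < ρ ε ∧ 0 < k ε :=
      ⟨1, one_pos, fun ε hε hε1 => ⟨(hρ.1 ε hε hε1).1, (hk ε hε hε1).1⟩⟩
    refine ((hpos.and hminv).and hN).mono fun ε ⟨⟨⟨hρε, hkε⟩, hkρ⟩, hMN⟩ => ?_
    refine abs_geom_sum_sub_one_div_one_sub_le_pow hρε hkε.le hkρ ?_
    calc (ρ ε ^ (q + 2 * m))⁻¹ ≤ ⌊(ρ ε ^ (q + 2 * m))⁻¹⌋₊ + 1 := (Nat.lt_floor_add_one _).le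
      _ ≤ ((N ε + 1 : ℕ) : ℝ) := by exact_mod_cast Nat.succ_le_succ hMN

/-- Geometric hyperseries: `Σ k^n = 1/(1-k)` for `0 < k < 1` invertibly away from `1`. -/
theorem geometric_hyperseries (ρ : ℝ → ℝ) (hρ : IsGauge ρ)
    (k : ℝ → ℝ) (hk : ∀ ε : ℝ, 0 < ε → ε ≤ 1 → 0 < k ε ∧ k ε < 1)
    (hkmod : Moderate ρ k) (hinvmod : Moderate ρ (fun ε => 1 / (1 - k ε)))
    (m : ℕ) (hminv : EvSmall (fun ε => ρ ε ^ m ≤ 1 - k ε)) :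
    ∀ q : ℕ, ∃ M : ℝ → ℕ, Moderate ρ (fun ε => (M ε : ℝ)) ∧
      ∀ N : ℝ → ℕ, EvSmall (fun ε => M ε ≤ N ε) →
        EvSmall (fun ε =>
          |∑ n ∈ Finset.range (N ε + 1), k ε ^ n - 1 / (1 - k ε)| ≤ ρ ε ^ q) :=
  geometric_hyperseries_general ρ hρ k hk m hminv
end
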